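/- Let f : ℝⁿ → ℝ be differentiable with L-Lipschitz gradient, p ∈ (0,1), λ > 0, β > L/2. Define F(x,ε) = f(x) + λ·Σᵢ (|xᵢ| + εᵢ)^p for ε ∈ ℝⁿ with ε > 0. Suppose x^{k+1} minimizes x ↦ ⟨∇f(x^k), x − x^k⟩ + (β/2)‖x − x^k‖² + λ·Σᵢ wᵢ^k |xᵢ| where wᵢ^k = p(|xᵢ^k| + εᵢ^k)^{p−1}, and 0 < ε^{k+1} ≤ ε^k componentwise. Then F(x^{k+1}, ε^{k+1}) ≤ F(x^k, ε^k) − (β − L/2)·‖x^{k+1} − x^k‖². -/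

import Mathlib

/-!
Majorize–minimize. The descent lemma bounds `f (x^{k+1})` by the linearization of `f` at `x^k`
plus `L / 2 * ‖x^{k+1} - x^k‖ ^ 2`. The subproblem objective is `β`-strongly convex, so comparing
its minimizer `x^{k+1}` with the competitor `x^k` gains `β * ‖x^{k+1} - x^k‖ ^ 2`, not only `β / 2`
times it. Finally `t ↦ t ^ p` is concave, so the smoothed penalty at `(x^{k+1}, ε^{k+1})` lies below
its tangent at `|x^k| + ε^k`, whose slopes are the weights `w`; shrinking `ε` only lowers it.
-/

open scoped RealInnerProductSpace
open Set Filter Topology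

theorem UniformConvexOn.add_le_of_isMinOn {E : Type*} [NormedAddCommGroup E] [NormedSpace ℝ E]
    {s : Set E} {φ : ℝ → ℝ} {f : E → ℝ} {x₀ x : E} (hf : UniformConvexOn s φ f)
    (hmin : IsMinOn f s x₀) (hx₀ : x₀ ∈ s) (hx : x ∈ s) :
    f x₀ + φ ‖x - x₀‖ ≤ f x := by
  have hsegment {t : ℝ} (ht : t ∈ Ioo 0 1) : f x₀ + (1 - t) * φ ‖x - x₀‖ ≤ f x := by
    have h1t : 0 ≤ 1 - t := sub_nonneg.2 ht.2.le
    have hconv := hf.2 hx₀ hx h1t ht.1.le (sub_add_cancel 1 t)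
    have hle := isMinOn_iff.1 hmin _ (hf.1 hx₀ hx h1t ht.1.le (sub_add_cancel 1 t))
    rw [smul_eq_mul, smul_eq_mul, norm_sub_rev] at hconv
    have : t * (f x₀ + (1 - t) * φ ‖x - x₀‖) ≤ t * f x := by linarith
    exact le_of_mul_le_mul_left this ht.1
  have hlim : Tendsto (fun t : ℝ => f x₀ + (1 - t) * φ ‖x - x₀‖) (𝓝[>] 0)
      (𝓝 (f x₀ + φ ‖x - x₀‖)) := by
    have : Continuous fun t : ℝ => f x₀ + (1 - t) * φ ‖x - x₀‖ := by fun_prop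
    simpa using this.continuousWithinAt.tendsto (x := 0) (s := Ioi 0)
  refine le_of_tendsto hlim ?_
  filter_upwards [Ioo_mem_nhdsGT zero_lt_one] with t ht using hsegment ht

section InnerProductSpace

variable {E : Type*} [NormedAddCommGroup E] [InnerProductSpace ℝ E]

theorem ConvexOn.strongConvexOn_add_sq_norm_sub {g : E → ℝ} (hg : ConvexOn ℝ univ g)
    (m : ℝ) (a : E) :
    StrongConvexOn univ m fun x => g x + m / 2 * ‖x - a‖ ^ 2 := by
  rw [strongConvexOn_iff_convex]
  have hsplit : (fun x => g x + m / 2 * ‖x - a‖ ^ 2 - m / 2 * ‖x‖ ^ 2)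
      = fun x => g x + innerSL ℝ (-m • a) x + m / 2 * ‖a‖ ^ 2 := by
    ext x
    rw [innerSL_apply_apply, real_inner_smul_left, real_inner_comm, norm_sub_sq_real]
    ring
  rw [hsplit]
  exact (hg.add ((innerSL ℝ (-m • a)).toLinearMap.convexOn convex_univ)).add_const _

variable [CompleteSpace E] {f : E → ℝ}

theorem DifferentiableAt.hasDerivAt_comp_add_smul {x d : E} {t : ℝ}
    (hf : DifferentiableAt ℝ f (x + t • d)) :
    HasDerivAt (fun s : ℝ => f (x + s • d)) ⟪gradient f (x + t • d), d⟫ t := by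
  have hline : HasDerivAt (fun s : ℝ => x + s • d) d t := by
    simpa using ((hasDerivAt_id t).smul_const d).const_add x
  simpa [InnerProductSpace.toDual_apply_apply, Function.comp_def] using
    hf.hasGradientAt.hasFDerivAt.comp_hasDerivAt t hline

/-- The gap between the quadratic upper model and `f` along the segment is monotone; arguing this
way instead of integrating `∇f` needs no continuity of `∇f`. -/
theorem le_add_inner_gradient_add_sq_norm_of_lipschitz {L : ℝ} (hf : Differentiable ℝ f)
    (hlip : ∀ x y, ‖gradient f x - gradient f y‖ ≤ L * ‖x - y‖) (x y : E) :
    f y ≤ f x + ⟪gradient f x, y - x⟫ + L / 2 * ‖y - x‖ ^ 2 := by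
  set d := y - x
  have hderiv (t : ℝ) : HasDerivAt
      (fun s : ℝ => f x + s * ⟪gradient f x, d⟫ + L / 2 * s ^ 2 * ‖d‖ ^ 2 - f (x + s • d))
      (⟪gradient f x, d⟫ + L * t * ‖d‖ ^ 2 - ⟪gradient f (x + t • d), d⟫) t := by
    refine ((((hasDerivAt_mul_const _).const_add (f x)).add
      (((hasDerivAt_pow 2 t).const_mul (L / 2)).mul_const (‖d‖ ^ 2))).sub
      (hf (x + t • d)).hasDerivAt_comp_add_smul).congr_deriv ?_
    push_cast
    ring
  have hinner {t : ℝ} (ht : 0 ≤ t) :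
      ⟪gradient f (x + t • d) - gradient f x, d⟫ ≤ L * t * ‖d‖ ^ 2 :=
    calc ⟪gradient f (x + t • d) - gradient f x, d⟫
        ≤ ‖gradient f (x + t • d) - gradient f x‖ * ‖d‖ := real_inner_le_norm _ _
      _ ≤ L * ‖t • d‖ * ‖d‖ := by
          gcongr; simpa using hlip (x + t • d) x
      _ = L * t * ‖d‖ ^ 2 := by rw [norm_smul, Real.norm_of_nonneg ht]; ring
  have hmono := monotoneOn_of_hasDerivWithinAt_nonneg (convex_Ici 0)
    (fun t _ => (hderiv t).continuousAt.continuousWithinAt)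
    (fun t _ => (hderiv t).hasDerivWithinAt) (fun t ht => by
      rw [interior_Ici] at ht
      have := hinner ht.le
      rw [inner_sub_left] at this
      linarith)
  have := hmono self_mem_Ici (mem_Ici.2 zero_le_one) zero_le_one
  simp only [zero_mul, zero_pow two_ne_zero, mul_zero, add_zero, zero_smul, sub_self, one_mul,
    one_pow, mul_one, one_smul, d, add_sub_cancel] at this
  linarith

end InnerProductSpace

theorem convexOn_sum_mul_abs {ι : Type*} [Fintype ι] {w : ι → ℝ} (hw : ∀ i, 0 ≤ w i) :
    ConvexOn ℝ univ fun x : EuclideanSpace ℝ ι => ∑ i, w i * |x i| := by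
  refine ⟨convex_univ, fun x _ y _ a b ha hb _ => ?_⟩
  simp only [smul_eq_mul, PiLp.add_apply, PiLp.smul_apply, Finset.mul_sum,
    ← Finset.sum_add_distrib]
  gcongr with i
  calc w i * |a * x i + b * y i| ≤ w i * (a * |x i| + b * |y i|) := by
        refine mul_le_mul_of_nonneg_left ?_ (hw i)
        calc |a * x i + b * y i| ≤ |a * x i| + |b * y i| := abs_add_le _ _
          _ = a * |x i| + b * |y i| := by
              rw [abs_mul, abs_mul, abs_of_nonneg ha, abs_of_nonneg hb]
    _ = a * (w i * |x i|) + b * (w i * |y i|) := by ring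

theorem Real.rpow_le_rpow_add_mul_rpow_sub_one_mul_sub {p a b : ℝ} (hp₀ : 0 ≤ p) (hp₁ : p ≤ 1)
    (ha : 0 < a) (hb : 0 ≤ b) :
    b ^ p ≤ a ^ p + p * a ^ (p - 1) * (b - a) := by
  have hbern := rpow_one_add_le_one_add_mul_self (s := b / a - 1)
    (by linarith [div_nonneg hb ha.le]) hp₀ hp₁
  rw [add_sub_cancel, div_rpow hb ha.le, div_le_iff₀ (rpow_pos_of_pos ha p)] at hbern
  calc b ^ p ≤ (1 + p * (b / a - 1)) * a ^ p := hbern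
    _ = a ^ p + p * (a ^ p / a) * (b - a) := by field_simp
    _ = a ^ p + p * a ^ (p - 1) * (b - a) := by rw [rpow_sub_one ha.ne']

theorem rpow_abs_add_le_of_le {p x y ε ε' : ℝ} (hp₀ : 0 ≤ p) (hp₁ : p ≤ 1) (hε : 0 < ε)
    (hε' : 0 ≤ ε') (hle : ε' ≤ ε) :
    (|y| + ε') ^ p ≤ (|x| + ε) ^ p + p * (|x| + ε) ^ (p - 1) * (|y| - |x|) := by
  calc (|y| + ε') ^ p
      ≤ (|x| + ε) ^ p + p * (|x| + ε) ^ (p - 1) * ((|y| + ε') - (|x| + ε)) :=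
        Real.rpow_le_rpow_add_mul_rpow_sub_one_mul_sub hp₀ hp₁ (by positivity) (by positivity)
    _ ≤ (|x| + ε) ^ p + p * (|x| + ε) ^ (p - 1) * (|y| - |x|) := by
        gcongr (|x| + ε) ^ p + p * (|x| + ε) ^ (p - 1) * ?_
        linarith

theorem pirl1_smoothed_decrease_general (n : ℕ) (f : EuclideanSpace ℝ (Fin n) → ℝ)
    (L : ℝ) (hf : Differentiable ℝ f)
    (hlip : ∀ x y, ‖gradient f x - gradient f y‖ ≤ L * ‖x - y‖)
    (p lam β : ℝ) (hp0 : 0 < p) (hp1 : p < 1) (hlam : 0 < lam)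
    (F : EuclideanSpace ℝ (Fin n) → (Fin n → ℝ) → ℝ)
    (hF : ∀ x ε, F x ε = f x + lam * ∑ i, (|x i| + ε i) ^ p)
    (xk xkp : EuclideanSpace ℝ (Fin n)) (εk εkp : Fin n → ℝ)
    (hεk : ∀ i, 0 < εk i) (hεkp : ∀ i, 0 < εkp i) (hεle : ∀ i, εkp i ≤ εk i)
    (w : Fin n → ℝ) (hwdef : ∀ i, w i = p * (|xk i| + εk i) ^ (p - 1))
    (hmin : ∀ x : EuclideanSpace ℝ (Fin n),
      inner ℝ (gradient f xk) (xkp - xk) + (β / 2) * ‖xkp - xk‖ ^ 2 + lam * ∑ i, w i * |xkp i|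
        ≤ inner ℝ (gradient f xk) (x - xk) + (β / 2) * ‖x - xk‖ ^ 2 + lam * ∑ i, w i * |x i|) :
    F xkp εkp ≤ F xk εk - (β - L / 2) * ‖xkp - xk‖ ^ 2 := by
  have hw (i : Fin n) : 0 ≤ w i := by
    have := hεk i
    rw [hwdef]; positivity
  set φ := fun x : EuclideanSpace ℝ (Fin n) => ⟪gradient f xk, x⟫ + lam * ∑ i, w i * |x i|
  have hφ : ConvexOn ℝ univ φ :=
    ((innerSL ℝ (gradient f xk)).toLinearMap.convexOn convex_univ).add
      ((convexOn_sum_mul_abs hw).smul hlam.le)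
  have hxkp : IsMinOn (fun x => φ x + β / 2 * ‖x - xk‖ ^ 2) univ xkp :=
    isMinOn_univ_iff.2 fun x => by
      have := hmin x
      simp only [φ, inner_sub_right] at this ⊢
      linarith
  have hprox := (hφ.strongConvexOn_add_sq_norm_sub β xk).add_le_of_isMinOn hxkp trivial
    (mem_univ xk)
  have hdesc := le_add_inner_gradient_add_sq_norm_of_lipschitz hf hlip xk xkp
  have hpen : ∑ i, (|xkp i| + εkp i) ^ p
      ≤ ∑ i, (|xk i| + εk i) ^ p + (∑ i, w i * |xkp i| - ∑ i, w i * |xk i|) := by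
    simp_rw [← Finset.sum_sub_distrib, ← Finset.sum_add_distrib, ← mul_sub, hwdef]
    exact Finset.sum_le_sum fun i _ =>
      rpow_abs_add_le_of_le hp0.le hp1.le (hεk i) (hεkp i).le (hεle i)
  simp only [φ, sub_self, norm_zero, norm_sub_rev xk xkp] at hprox
  rw [inner_sub_right] at hdesc
  rw [hF, hF]
  linarith [mul_le_mul_of_nonneg_left hpen hlam.le]

theorem pirl1_smoothed_decrease (n : ℕ) (f : EuclideanSpace ℝ (Fin n) → ℝ)
    (L : ℝ) (hL : 0 ≤ L) (hf : Differentiable ℝ f)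
    (hlip : ∀ x y, ‖gradient f x - gradient f y‖ ≤ L * ‖x - y‖)
    (p lam β : ℝ) (hp0 : 0 < p) (hp1 : p < 1) (hlam : 0 < lam) (hβ : L / 2 < β)
    (F : EuclideanSpace ℝ (Fin n) → (Fin n → ℝ) → ℝ)
    (hF : ∀ x ε, F x ε = f x + lam * ∑ i, (|x i| + ε i) ^ p)
    (xk xkp : EuclideanSpace ℝ (Fin n)) (εk εkp : Fin n → ℝ)
    (hεk : ∀ i, 0 < εk i) (hεkp : ∀ i, 0 < εkp i) (hεle : ∀ i, εkp i ≤ εk i)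
    (w : Fin n → ℝ) (hwdef : ∀ i, w i = p * (|xk i| + εk i) ^ (p - 1))
    (hmin : ∀ x : EuclideanSpace ℝ (Fin n),
      inner ℝ (gradient f xk) (xkp - xk) + (β / 2) * ‖xkp - xk‖ ^ 2 + lam * ∑ i, w i * |xkp i|
        ≤ inner ℝ (gradient f xk) (x - xk) + (β / 2) * ‖x - xk‖ ^ 2 + lam * ∑ i, w i * |x i|) :
    F xkp εkp ≤ F xk εk - (β - L / 2) * ‖xkp - xk‖ ^ 2 :=
  pirl1_smoothed_decrease_general n f L hf hlip p lam β hp0 hp1 hlam F hF xk xkp εk εkp hεk hεkp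
    hεle w hwdef hmin
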